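/- arXiv:2010.11179 — 2 statements merged into one kernel-verified Lean document; each statement's English description precedes it below -/
import Mathlib

section
/- Let α, β₀ be reals with 0 < α < 1/2, β₀ > 0 and α + β₀ < 1/2. Let p be a prime such that for every nontrivial multiplicative character χ of F_p and all subsets S, T ⊆ F_p with |S| > p^α and |T| > p^α, one has |Σ_{s∈S, t∈T} χ(s−t)| ≤ p^{−β₀}·|S|·|T|. Let k ≥ 2 be a divisor of p − 1 and let τ be a real number with α + β₀ < τ < 1/2. Then the matrix Φ_p^{(k)} has the (K, θ)-flat restricted isometry property with K = ⌊p^{τ+β₀}⌋ and θ = (k−1)·p^{τ−1/2}; that is, for every pair of disjoint subsets I, J ⊆ F_p with |I| ≤ p^{τ+β₀} and |J| ≤ p^{τ+β₀}, one has |⟨Σ_{i∈I} φ_i, Σ_{j∈J} φ_j⟩| ≤ (k−1)·p^{τ−1/2}·√(|I|·|J|). -/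
/-- The canonical additive character `ψ` of `F_p`, `ψ(x) = exp(2π√−1·x/p)`. -/
noncomputable def psi (p : ℕ) (x : ZMod p) : ℂ :=
  Complex.exp (2 * Real.pi * Complex.I * (x.val : ℂ) / (p : ℂ))

/-- The `((p+k−1)/k) × p` matrix `Φ_p^{(k)}`: columns indexed by `a ∈ F_p`;
rows indexed by `Option R_p^{(k)}` where `R_p^{(k)}` is the set of nonzero `k`-th
power residues.  The `none` row has entries `1/√p`, and the row of `b ∈ R_p^{(k)}`
has entries `√(k/p)·ψ(b·a)`. -/
noncomputable def Phi (p k : ℕ) :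
    Matrix (Option {b : ZMod p // ∃ x : ZMod p, x ≠ 0 ∧ x ^ k = b}) (ZMod p) ℂ :=
  fun r a =>
    match r with
    | none => ((1 / Real.sqrt p : ℝ) : ℂ)
    | some b => ((Real.sqrt ((k : ℝ) / (p : ℝ)) : ℝ) : ℂ) * psi p (b.1 * a)

/-- A multiplicative character of `F_p`. -/
def IsMulChar (p : ℕ) (χ : ZMod p → ℂ) : Prop :=
  χ 0 = 0 ∧ (∀ x : ZMod p, x ≠ 0 → ‖χ x‖ = 1) ∧
    ∀ x y : ZMod p, x ≠ 0 → y ≠ 0 → χ (x * y) = χ x * χ y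

/-- A nontrivial multiplicative character of `F_p`. -/
def IsNontrivMulChar (p : ℕ) (χ : ZMod p → ℂ) : Prop :=
  IsMulChar p χ ∧ ∃ x : ZMod p, x ≠ 0 ∧ χ x ≠ 1

/-!
Write `c = s - t ≠ 0`. The Gram entry `⟨φ_s, φ_t⟩` is `(1 + k ∑_{b ∈ R} ψ(b c)) / p`. Expanding the
indicator of the `k`-th power residues as `k⁻¹ ∑_{j < k} χ^j` for a character `χ` of order `k`
turns it into `p⁻¹ ∑_{0 < j < k} χ^{-j}(c) G(χ^j)`, the `j = 0` term (`G(1) = -1`) cancelling the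
first row. Summing over `I × J`, every Gauss sum has modulus `√p`, and every character sum
`∑ χ^{-j}(s - t)` is at most `p^τ √(|I| |J|)`: by hypothesis when both sets exceed `p^α`, and
trivially otherwise, since then `|I| |J| ≤ p^(α + τ + β₀) ≤ p^(2τ)`.
-/

open Finset ComplexConjugate

lemma geom_sum_eq_zero_of_pow_eq_one {R : Type*} [CommRing R] [IsDomain R] {u : R} {n : ℕ}
    (hu : u ^ n = 1) (h1 : u ≠ 1) :
    ∑ i ∈ range n, u ^ i = 0 := by
  have h := geom_sum_mul u n
  rw [hu, sub_self] at h
  exact (mul_eq_zero.mp h).resolve_right (sub_ne_zero.mpr h1)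

namespace MulChar

variable {F R : Type*} [Field F] [CommRing R]

lemma isPrimitiveRoot_apply_of_forall_mem_zpowers {g : Fˣ}
    (hg : ∀ x, x ∈ Subgroup.zpowers g) (χ : MulChar F R) :
    IsPrimitiveRoot (χ g) (orderOf χ) := by
  refine (IsPrimitiveRoot.iff_def _ _).mpr ⟨?_, fun l hl => orderOf_dvd_of_pow_eq_one ?_⟩
  · rw [← pow_apply_coe, pow_orderOf_eq_one, one_apply_coe]
  · rw [eq_iff hg, pow_apply_coe, hl, one_apply_coe]

variable [Fintype F]

lemma apply_eq_one_iff_exists_pow_orderOf (χ : MulChar F R) {y : F} (hy : y ≠ 0) :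
    χ y = 1 ↔ ∃ x, x ≠ 0 ∧ x ^ orderOf χ = y := by
  constructor
  · intro h
    obtain ⟨g, hg⟩ := IsCyclic.exists_generator (α := Fˣ)
    obtain ⟨n, hn⟩ : ∃ n : ℕ, (g : F) ^ n = y := by
      obtain ⟨n, hn⟩ := mem_powers_iff_mem_zpowers.mpr (hg (Units.mk0 y hy))
      exact ⟨n, by rw [← Units.val_pow_eq_pow_val, show g ^ n = _ from hn, Units.val_mk0]⟩
    have hgn : χ g ^ n = 1 := by rw [← map_pow, hn, h]
    obtain ⟨m, rfl⟩ := (isPrimitiveRoot_apply_of_forall_mem_zpowers hg χ).dvd_of_pow_eq_one n hgn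
    exact ⟨(g : F) ^ m, pow_ne_zero m g.ne_zero, by rw [← pow_mul, mul_comm, hn]⟩
  · rintro ⟨x, hx, rfl⟩
    rw [map_pow, ← pow_apply' χ χ.orderOf_pos.ne', pow_orderOf_eq_one,
      one_apply hx.isUnit]

lemma sum_range_orderOf_pow_apply [DecidableEq F] [IsDomain R] (χ : MulChar F R) (y : F) :
    ∑ j ∈ range (orderOf χ), (χ ^ j) y =
      if ∃ x, x ≠ 0 ∧ x ^ orderOf χ = y then (orderOf χ : R) else 0 := by
  rcases eq_or_ne y 0 with rfl | hy
  · have hzero : ¬ ∃ x : F, x ≠ 0 ∧ x ^ orderOf χ = 0 :=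
      fun ⟨x, hx, hx0⟩ => hx (pow_eq_zero_iff χ.orderOf_pos.ne' |>.mp hx0)
    rw [if_neg hzero]
    exact sum_eq_zero fun j _ => (χ ^ j).map_zero
  have hpow : ∀ j, (χ ^ j) y = χ y ^ j := fun j => pow_apply_coe χ j (Units.mk0 y hy)
  simp_rw [hpow]
  by_cases h1 : χ y = 1
  · rw [if_pos ((apply_eq_one_iff_exists_pow_orderOf χ hy).mp h1)]
    simp [h1]
  · rw [if_neg (mt (apply_eq_one_iff_exists_pow_orderOf χ hy).mpr h1)]
    refine geom_sum_eq_zero_of_pow_eq_one ?_ h1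
    rw [← hpow, pow_orderOf_eq_one, one_apply (Ne.isUnit hy)]

lemma orderOf_mul_sum_powers_eq_sum_gaussSum [DecidableEq F] [IsDomain R] (χ : MulChar F R)
    (ψ : AddChar F R) (c : Fˣ) :
    (orderOf χ : R) * ∑ y : {y : F // ∃ x, x ≠ 0 ∧ x ^ orderOf χ = y}, ψ (c * y) =
      ∑ j ∈ range (orderOf χ), (χ ^ j)⁻¹ c * gaussSum (χ ^ j) ψ := by
  calc (orderOf χ : R) * ∑ y : {y : F // ∃ x, x ≠ 0 ∧ x ^ orderOf χ = y}, ψ (c * y)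
      = ∑ y, (∑ j ∈ range (orderOf χ), (χ ^ j) y) * ψ (c * y) := by
        simp_rw [sum_range_orderOf_pow_apply, ite_mul, zero_mul, ← sum_filter, mul_sum]
        symm
        exact sum_subtype _ (fun _ => mem_filter_univ _) _
    _ = ∑ j ∈ range (orderOf χ), gaussSum (χ ^ j) (ψ.mulShift c) := by
        simp_rw [sum_mul, gaussSum, AddChar.mulShift_apply]
        exact sum_comm
    _ = _ := by simp_rw [gaussSum_mulShift_eq]

end MulChar

lemma norm_gaussSum_eq_sqrt {F : Type*} [Field F] [Fintype F] {χ : MulChar F ℂ} (hχ : χ ≠ 1)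
    {ψ : AddChar F ℂ} (hψ : ψ.IsPrimitive) :
    ‖gaussSum χ ψ‖ = √(Fintype.card F) := by
  have h := gaussSum_mul_gaussSum_eq_card hχ hψ
  rw [← star_gaussSum_eq, Complex.star_def, Complex.mul_conj] at h
  rw [← Real.sqrt_sq (norm_nonneg _), ← Complex.normSq_eq_norm_sq]
  exact congrArg _ (mod_cast h)

lemma le_rpow_mul_sqrt_of_le_rpow_neg_mul {P α β τ a b B : ℝ} (hP : 1 ≤ P) (hτ : α + β ≤ τ)
    (ha : 0 ≤ a) (hb : 0 ≤ b) (haP : a ≤ P ^ (τ + β)) (hbP : b ≤ P ^ (τ + β))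
    (htriv : B ≤ a * b) (hlarge : P ^ α < a → P ^ α < b → B ≤ P ^ (-β) * a * b) :
    B ≤ P ^ τ * √(a * b) := by
  have hP0 : 0 < P := by linarith
  have hab : a * b = √(a * b) * √(a * b) := (Real.mul_self_sqrt (by positivity)).symm
  by_cases hbig : P ^ α < a ∧ P ^ α < b
  · have hsqrt : √(a * b) ≤ P ^ (τ + β) :=
      Real.sqrt_le_iff.mpr ⟨by positivity, by rw [sq]; exact mul_le_mul haP hbP hb (by positivity)⟩
    calc B ≤ P ^ (-β) * (a * b) := by rw [← mul_assoc]; exact hlarge hbig.1 hbig.2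
      _ ≤ P ^ (-β) * (P ^ (τ + β) * √(a * b)) := mul_le_mul_of_nonneg_left
        (hab.trans_le (mul_le_mul_of_nonneg_right hsqrt (Real.sqrt_nonneg _))) (by positivity)
      _ = P ^ τ * √(a * b) := by rw [← mul_assoc, ← Real.rpow_add hP0]; ring_nf
  · have hsmall : a * b ≤ P ^ α * P ^ (τ + β) := by
      rcases not_and_or.mp hbig with h | h
      · exact mul_le_mul (not_lt.mp h) hbP hb (by positivity)
      · rw [mul_comm (P ^ α)]
        exact mul_le_mul haP (not_lt.mp h) hb (by positivity)
    have hsqrt : √(a * b) ≤ P ^ τ := by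
      refine Real.sqrt_le_iff.mpr ⟨by positivity, ?_⟩
      calc a * b ≤ P ^ α * P ^ (τ + β) := hsmall
        _ = P ^ (α + (τ + β)) := (Real.rpow_add hP0 _ _).symm
        _ ≤ P ^ (τ + τ) := Real.rpow_le_rpow_of_exponent_le hP (by linarith)
        _ = (P ^ τ) ^ 2 := by rw [Real.rpow_add hP0, sq]
    calc B ≤ √(a * b) * √(a * b) := hab ▸ htriv
      _ ≤ P ^ τ * √(a * b) := by gcongr

lemma DirichletCharacter.norm_sum_sum_sub_le {n : ℕ} (χ : DirichletCharacter ℂ n)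
    (I J : Finset (ZMod n)) :
    ‖∑ s ∈ I, ∑ t ∈ J, χ (s - t)‖ ≤ #I * #J := by
  calc _ ≤ ∑ s ∈ I, ∑ t ∈ J, (1 : ℝ) :=
        norm_sum_le_of_le _ fun s _ => norm_sum_le_of_le _ fun t _ => χ.norm_le_one _
    _ = #I * #J := by simp

section Phi

variable {p : ℕ} [NeZero p]

lemma psi_eq_stdAddChar (x : ZMod p) : psi p x = ZMod.stdAddChar x := by
  rw [ZMod.stdAddChar_apply, ZMod.toCircle_apply, psi]

lemma sum_Phi_mul_conj (k : ℕ) (s t : ZMod p) :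
    ∑ r, Phi p k r s * conj (Phi p k r t) =
      (1 + k * ∑ b : {b : ZMod p // ∃ x, x ≠ 0 ∧ x ^ k = b}, ZMod.stdAddChar ((s - t) * b.1)) /
        p := by
  have hp : (0 : ℝ) ≤ p := Nat.cast_nonneg p
  rw [Fintype.sum_option, mul_sum, add_div, sum_div]
  congr 1
  · simp only [Phi, Complex.conj_ofReal, ← Complex.ofReal_mul, div_mul_div_comm, one_mul,
      Real.mul_self_sqrt hp]
    push_cast
    rfl
  · refine sum_congr rfl fun b _ => ?_
    simp only [Phi, psi_eq_stdAddChar, map_mul, Complex.conj_ofReal, ← AddChar.map_neg_eq_conj]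
    rw [mul_mul_mul_comm, ← Complex.ofReal_mul, Real.mul_self_sqrt (by positivity),
      ← AddChar.map_add_eq_mul]
    push_cast
    ring_nf

end Phi

section Prime

variable {p : ℕ} [Fact p.Prime]

lemma sum_Phi_mul_conj_eq_sum_gaussSum (χ : MulChar (ZMod p) ℂ) {s t : ZMod p} (hst : s ≠ t) :
    ∑ r, Phi p (orderOf χ) r s * conj (Phi p (orderOf χ) r t) =
      (∑ j ∈ Ico 1 (orderOf χ), (χ ^ j)⁻¹ (s - t) * gaussSum (χ ^ j) ZMod.stdAddChar) / p := by
  have hψ : (ZMod.stdAddChar : AddChar (ZMod p) ℂ) ≠ 1 := by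
    simpa using ZMod.isPrimitive_stdAddChar p one_ne_zero
  have h := χ.orderOf_mul_sum_powers_eq_sum_gaussSum ZMod.stdAddChar
    (Units.mk0 (s - t) (sub_ne_zero.mpr hst))
  rw [Units.val_mk0] at h
  rw [sum_Phi_mul_conj, h, range_eq_Ico, sum_eq_sum_Ico_succ_bot χ.orderOf_pos, pow_zero, inv_one,
    MulChar.one_apply (sub_ne_zero.mpr hst).isUnit, gaussSum_one_left hψ, one_mul,
    add_neg_cancel_left]

lemma sum_Phi_sum_mul_conj_sum_eq (χ : MulChar (ZMod p) ℂ) {I J : Finset (ZMod p)}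
    (hIJ : Disjoint I J) :
    ∑ r, (∑ i ∈ I, Phi p (orderOf χ) r i) * conj (∑ j ∈ J, Phi p (orderOf χ) r j) =
      (∑ j ∈ Ico 1 (orderOf χ),
        (∑ s ∈ I, ∑ t ∈ J, (χ ^ j)⁻¹ (s - t)) * gaussSum (χ ^ j) ZMod.stdAddChar) / p := by
  calc _ = ∑ s ∈ I, ∑ t ∈ J, ∑ r, Phi p (orderOf χ) r s * conj (Phi p (orderOf χ) r t) := by
        simp_rw [map_sum, sum_mul_sum]
        rw [sum_comm]
        exact sum_congr rfl fun _ _ => sum_comm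
    _ = ∑ s ∈ I, ∑ t ∈ J, (∑ j ∈ Ico 1 (orderOf χ),
          (χ ^ j)⁻¹ (s - t) * gaussSum (χ ^ j) ZMod.stdAddChar) / p :=
        sum_congr rfl fun s hs => sum_congr rfl fun t ht =>
          sum_Phi_mul_conj_eq_sum_gaussSum χ fun hst => disjoint_left.mp hIJ hs (hst ▸ ht)
    _ = _ := by
        simp_rw [← sum_div, sum_mul]
        exact congrArg (· / _) ((sum_congr rfl fun _ _ => sum_comm).trans sum_comm)

lemma isNontrivMulChar_of_ne_one {χ : MulChar (ZMod p) ℂ} (hχ : χ ≠ 1) :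
    IsNontrivMulChar p χ := by
  refine ⟨⟨χ.map_zero, fun x hx => DirichletCharacter.unit_norm_eq_one χ hx.isUnit.unit,
    fun x y _ _ => map_mul χ x y⟩, ?_⟩
  by_contra! h
  exact hχ (MulChar.eq_one_iff.mpr fun a => h a a.ne_zero)

end Prime

theorem stmt_2_general (α β₀ : ℝ) (p : ℕ) (hp : p.Prime) [NeZero p]
    (hP : ∀ χ : ZMod p → ℂ, IsNontrivMulChar p χ →
      ∀ S T : Finset (ZMod p),
        (p : ℝ) ^ α < (S.card : ℝ) → (p : ℝ) ^ α < (T.card : ℝ) →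
          ‖∑ s ∈ S, ∑ t ∈ T, χ (s - t)‖ ≤
            (p : ℝ) ^ (-β₀) * (S.card : ℝ) * (T.card : ℝ))
    (k : ℕ) (hk2 : 2 ≤ k) (hkdvd : k ∣ p - 1)
    (τ : ℝ) (hτ1 : α + β₀ < τ) :
    ∀ I J : Finset (ZMod p), Disjoint I J →
      (I.card : ℝ) ≤ (p : ℝ) ^ (τ + β₀) → (J.card : ℝ) ≤ (p : ℝ) ^ (τ + β₀) →
        ‖∑ r, (∑ i ∈ I, Phi p k r i) * (starRingEnd ℂ) (∑ j ∈ J, Phi p k r j)‖ ≤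
          ((k : ℝ) - 1) * (p : ℝ) ^ (τ - 1 / 2) *
            Real.sqrt ((I.card : ℝ) * (J.card : ℝ)) := by
  have : Fact p.Prime := ⟨hp⟩
  intro I J hIJ hI hJ
  obtain ⟨χ, rfl⟩ := MulChar.exists_mulChar_orderOf (ZMod p) (by rwa [ZMod.card])
    (Complex.isPrimitiveRoot_exp k (by omega))
  have hp1 : (1 : ℝ) ≤ p := by exact_mod_cast hp.one_lt.le
  have hterm : ∀ j ∈ Ico 1 (orderOf χ),
      ‖(∑ s ∈ I, ∑ t ∈ J, (χ ^ j)⁻¹ (s - t)) * gaussSum (χ ^ j) ZMod.stdAddChar‖ ≤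
        p ^ τ * √(#I * #J) * √p := by
    intro j hj
    have hχj : χ ^ j ≠ 1 := pow_ne_one_of_lt_orderOf (by grind) (mem_Ico.mp hj).2
    rw [norm_mul, norm_gaussSum_eq_sqrt hχj (ZMod.isPrimitive_stdAddChar p), ZMod.card]
    gcongr
    exact le_rpow_mul_sqrt_of_le_rpow_neg_mul hp1 hτ1.le (by positivity) (by positivity) hI hJ
      (DirichletCharacter.norm_sum_sum_sub_le _ I J)
      (hP _ (isNontrivMulChar_of_ne_one (inv_ne_one.mpr hχj)) I J)
  rw [sum_Phi_sum_mul_conj_sum_eq χ hIJ, norm_div, Complex.norm_natCast]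
  calc _ ≤ (∑ j ∈ Ico 1 (orderOf χ), p ^ τ * √(#I * #J) * √p) / p := by
        gcongr
        exact norm_sum_le_of_le _ hterm
    _ = _ := by
        rw [sum_const, Nat.card_Ico, nsmul_eq_mul, Nat.cast_pred χ.orderOf_pos,
          Real.rpow_sub (by positivity), ← Real.sqrt_eq_rpow]
        field_simp
        rw [Real.sq_sqrt (Nat.cast_nonneg _)]

/-- under the property `𝒫(α, β₀)` for all nontrivial multiplicative
characters of `F_p`, with `α + β₀ < 1/2`, `k ≥ 2` a divisor of `p − 1` and
`α + β₀ < τ < 1/2`, the matrix `Φ_p^{(k)}` has the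
`(⌊p^{τ+β₀}⌋, (k−1)·p^{τ−1/2})`-flat RIP: for all disjoint `I, J ⊆ F_p` with
`|I|, |J| ≤ p^{τ+β₀}`, `|⟨Σ_{i∈I} φ_i, Σ_{j∈J} φ_j⟩| ≤ (k−1)·p^{τ−1/2}·√(|I|·|J|)`. -/
theorem stmt_2 (α β₀ : ℝ) (hα0 : 0 < α) (hα : α < 1 / 2) (hβ0 : 0 < β₀)
    (hαβ : α + β₀ < 1 / 2) (p : ℕ) (hp : p.Prime) [NeZero p]
    (hP : ∀ χ : ZMod p → ℂ, IsNontrivMulChar p χ →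
      ∀ S T : Finset (ZMod p),
        (p : ℝ) ^ α < (S.card : ℝ) → (p : ℝ) ^ α < (T.card : ℝ) →
          ‖∑ s ∈ S, ∑ t ∈ T, χ (s - t)‖ ≤
            (p : ℝ) ^ (-β₀) * (S.card : ℝ) * (T.card : ℝ))
    (k : ℕ) (hk2 : 2 ≤ k) (hkdvd : k ∣ p - 1)
    (τ : ℝ) (hτ1 : α + β₀ < τ) (hτ2 : τ < 1 / 2) :
    ∀ I J : Finset (ZMod p), Disjoint I J →
      (I.card : ℝ) ≤ (p : ℝ) ^ (τ + β₀) → (J.card : ℝ) ≤ (p : ℝ) ^ (τ + β₀) →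
        ‖∑ r, (∑ i ∈ I, Phi p k r i) * (starRingEnd ℂ) (∑ j ∈ J, Phi p k r j)‖ ≤
          ((k : ℝ) - 1) * (p : ℝ) ^ (τ - 1 / 2) *
            Real.sqrt ((I.card : ℝ) * (J.card : ℝ)) :=
  stmt_2_general α β₀ p hp hP k hk2 hkdvd τ hτ1
end

section
/- Let Φ be an M × N complex matrix each of whose columns has ℓ₂-norm 1, and let K ≤ M ≤ N and θ > 0. If Φ has the (K, θ)-flat restricted isometry property, then Φ has the (K, 150·θ·log K)-restricted isometry property. -/
/-- The `(K, θ)`-flat restricted isometry property: for all disjoint index sets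
`I, J` of size at most `K`, `|⟨Σ_{i∈I} ψ_i, Σ_{j∈J} ψ_j⟩| ≤ θ·√(|I|·|J|)`,
where the `ψ_i` are the columns of `Φ`. -/
def HasFlatRIP {m n : Type*} [Fintype m] [Fintype n]
    (Φ : Matrix m n ℂ) (K : ℕ) (θ : ℝ) : Prop :=
  ∀ I J : Finset n, Disjoint I J → I.card ≤ K → J.card ≤ K →
    ‖∑ l, (∑ i ∈ I, Φ l i) * (starRingEnd ℂ) (∑ j ∈ J, Φ l j)‖ ≤
      θ * Real.sqrt ((I.card : ℝ) * (J.card : ℝ))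

/-- The `(K, δ)`-restricted isometry property:
`(1−δ)‖x‖² ≤ ‖Φx‖² ≤ (1+δ)‖x‖²` for every vector `x` with at most `K` nonzero entries. -/
def HasRIP {m n : Type*} [Fintype m] [Fintype n]
    (Φ : Matrix m n ℂ) (K : ℕ) (δ : ℝ) : Prop :=
  ∀ x : n → ℂ, Set.ncard {j | x j ≠ 0} ≤ K →
    (1 - δ) * ∑ j, ‖x j‖ ^ 2 ≤ ∑ i, ‖∑ j, Φ i j * x j‖ ^ 2 ∧
    ∑ i, ‖∑ j, Φ i j * x j‖ ^ 2 ≤ (1 + δ) * ∑ j, ‖x j‖ ^ 2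

open Finset Matrix

/-!
Flat RIP bounds the Gram sums `∑_{p ∈ I} ∑_{q ∈ J} ⟨ψ_p, ψ_q⟩` over disjoint `I, J`. For
nonnegative weights, peeling off the weights layer by layer (Abel summation) turns the bound
`θ √|I|` on unweighted sums into `θ √(H_K) ‖w‖`, with `H_K` the harmonic number; used in both
variables it bounds the bilinear form on disjoint supports by `θ H_K ‖u‖ ‖v‖`. Averaging over all
splittings `S = T ∪ (S \ T)` of the support recovers the off-diagonal part of the Gram form at the
cost of a factor 4, and passing to signed and then complex vectors costs a factor 2 each. Hence
`|‖Φx‖² - ‖x‖²| ≤ 16 θ H_K ‖x‖²`, and `16 H_K ≤ 16 (1 + log K) ≤ 150 log K` once `K ≥ 2`.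
-/

lemma harmonic_nonneg (n : ℕ) : 0 ≤ harmonic n :=
  sum_nonneg fun _ _ => by positivity

lemma harmonic_mono : Monotone harmonic :=
  monotone_nat_of_le_succ fun n => by
    rw [harmonic_succ]
    exact le_add_of_nonneg_right (by positivity)

lemma posPart_sq_add_negPart_sq (a : ℝ) : a⁺ ^ 2 + a⁻ ^ 2 = a ^ 2 := by
  rcases le_total a 0 with h | h
  · simp [posPart_eq_zero.mpr h, negPart_eq_neg.mpr h]
  · simp [posPart_eq_self.mpr h, negPart_eq_zero.mpr h]

lemma sqrt_add_sqrt_le_sqrt_two_mul {a b : ℝ} (ha : 0 ≤ a) (hb : 0 ≤ b) :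
    √a + √b ≤ √2 * √(a + b) := by
  rw [← Real.sqrt_mul zero_le_two]
  apply Real.le_sqrt_of_sq_le
  nlinarith [Real.sq_sqrt ha, Real.sq_sqrt hb, sq_nonneg (√a - √b)]

section Superlevel

variable {ι : Type*}

/-- The rank of `i` when `S` is sorted by decreasing `w`, ties counted in favour of `i`; it stands
in for sorting the weights. -/
noncomputable def superlevelCard (S : Finset ι) (w : ι → ℝ) (i : ι) : ℕ := #{j ∈ S | w i ≤ w j}

lemma superlevelCard_pos {S : Finset ι} {i : ι} (w : ι → ℝ) (hi : i ∈ S) :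
    0 < superlevelCard S w i :=
  card_pos.mpr ⟨i, mem_filter.mpr ⟨hi, le_rfl⟩⟩

lemma superlevelCard_le_card (S : Finset ι) (w : ι → ℝ) (i : ι) : superlevelCard S w i ≤ #S :=
  card_filter_le _ _

lemma sqrt_card_le_sum_inv_sqrt_superlevelCard (S : Finset ι) (w : ι → ℝ) :
    √(#S : ℝ) ≤ ∑ i ∈ S, 1 / √(superlevelCard S w i) := by
  calc √(#S : ℝ) = ∑ _i ∈ S, 1 / √(#S : ℝ) := by
        rw [sum_const, nsmul_eq_mul, mul_one_div, Real.div_sqrt]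
    _ ≤ ∑ i ∈ S, 1 / √(superlevelCard S w i) := sum_le_sum fun i hi =>
        one_div_le_one_div_of_le (Real.sqrt_pos.mpr (by exact_mod_cast superlevelCard_pos w hi))
          (Real.sqrt_le_sqrt (by exact_mod_cast superlevelCard_le_card S w i))

variable [DecidableEq ι]

lemma superlevelCard_insert_of_lt {S : Finset ι} {w : ι → ℝ} {a i : ι} (h : w a < w i) :
    superlevelCard (insert a S) w i = superlevelCard S w i := by
  rw [superlevelCard, filter_insert, if_neg h.not_ge, superlevelCard]

lemma sum_inv_superlevelCard_le_harmonic (S : Finset ι) (w : ι → ℝ) :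
    ∑ i ∈ S, ((superlevelCard S w i : ℝ))⁻¹ ≤ harmonic #S := by
  induction S using Finset.induction_on_min_value w with
  | empty => simp
  | insert a s ha hmin ih =>
    have hmax : superlevelCard (insert a s) w a = #s + 1 := by
      rw [superlevelCard, filter_true_of_mem, card_insert_of_notMem ha]
      simpa using hmin
    have hmono : ∀ i ∈ s, ((superlevelCard (insert a s) w i : ℝ))⁻¹
        ≤ ((superlevelCard s w i : ℝ))⁻¹ := fun i hi =>
      inv_anti₀ (by exact_mod_cast superlevelCard_pos w hi)
        (by exact_mod_cast card_le_card (filter_subset_filter _ (subset_insert a s)))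
    rw [sum_insert ha, card_insert_of_notMem ha, harmonic_succ, hmax]
    push_cast
    linarith [sum_le_sum hmono]

variable {E : Type*} [NormedAddCommGroup E] [NormedSpace ℝ E]

theorem norm_sum_smul_le_sum_div_sqrt_superlevelCard {S : Finset ι} {w : ι → ℝ} {t : ι → E}
    {C : ℝ} (hC : 0 ≤ C) (hw : ∀ i ∈ S, 0 ≤ w i)
    (ht : ∀ I ⊆ S, ‖∑ i ∈ I, t i‖ ≤ C * √(#I : ℝ)) :
    ‖∑ i ∈ S, w i • t i‖ ≤ C * ∑ i ∈ S, w i / √(superlevelCard S w i) := by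
  suffices key : ∀ c, (∀ i ∈ S, c ≤ w i) →
      ‖∑ i ∈ S, (w i - c) • t i‖ ≤ C * ∑ i ∈ S, (w i - c) / √(superlevelCard S w i) by
    simpa using key 0 hw
  clear hw
  -- Shifting `w` by `c` does not change its superlevel sets, so each step of the induction peels
  -- off the lowest layer `w a - c` of the weights, supported on the whole current set.
  induction S using Finset.induction_on_min_value w with
  | empty => simp
  | insert a s ha hmin ih =>
    intro c hc
    have hca : 0 ≤ w a - c := sub_nonneg.mpr (hc a (mem_insert_self a s))
    have hsmul : ∑ i ∈ insert a s, (w i - c) • t i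
        = (w a - c) • ∑ i ∈ insert a s, t i + ∑ i ∈ s, (w i - w a) • t i := by
      have hbottom : ∑ i ∈ s, (w i - w a) • t i = ∑ i ∈ insert a s, (w i - w a) • t i := by
        simp [sum_insert ha]
      rw [hbottom, smul_sum, ← sum_add_distrib]
      exact sum_congr rfl fun i _ => by rw [← add_smul, sub_add_sub_cancel']
    have hdiv : ∑ i ∈ insert a s, (w i - c) / √(superlevelCard (insert a s) w i)
        = (w a - c) * ∑ i ∈ insert a s, 1 / √(superlevelCard (insert a s) w i)
          + ∑ i ∈ s, (w i - w a) / √(superlevelCard s w i) := by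
      have hbottom : ∑ i ∈ s, (w i - w a) / √(superlevelCard s w i)
          = ∑ i ∈ insert a s, (w i - w a) / √(superlevelCard (insert a s) w i) := by
        rw [sum_insert ha, sub_self, zero_div, zero_add]
        refine sum_congr rfl fun i hi => ?_
        rcases (hmin i hi).eq_or_lt with heq | hlt
        · simp [heq]
        · rw [superlevelCard_insert_of_lt hlt]
      rw [hbottom, mul_sum, ← sum_add_distrib]
      exact sum_congr rfl fun i _ => by ring
    have hrest := ih (fun I hI => ht I (hI.trans (subset_insert a s))) (w a) hmin
    calc ‖∑ i ∈ insert a s, (w i - c) • t i‖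
        ≤ (w a - c) * (C * √(#(insert a s) : ℝ))
          + C * ∑ i ∈ s, (w i - w a) / √(superlevelCard s w i) := by
          rw [hsmul]
          refine (norm_add_le _ _).trans (add_le_add ?_ hrest)
          rw [norm_smul, Real.norm_of_nonneg hca]
          exact mul_le_mul_of_nonneg_left (ht _ subset_rfl) hca
      _ ≤ (w a - c) * (C * ∑ i ∈ insert a s, 1 / √(superlevelCard (insert a s) w i))
          + C * ∑ i ∈ s, (w i - w a) / √(superlevelCard s w i) := by
          gcongr
          exact sqrt_card_le_sum_inv_sqrt_superlevelCard _ w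
      _ = C * ∑ i ∈ insert a s, (w i - c) / √(superlevelCard (insert a s) w i) := by
          rw [hdiv]; ring

theorem norm_sum_smul_le_sqrt_harmonic_mul {S : Finset ι} {w : ι → ℝ} {t : ι → E}
    {C : ℝ} (hC : 0 ≤ C) (hw : ∀ i ∈ S, 0 ≤ w i)
    (ht : ∀ I ⊆ S, ‖∑ i ∈ I, t i‖ ≤ C * √(#I : ℝ)) :
    ‖∑ i ∈ S, w i • t i‖ ≤ C * √(harmonic #S : ℝ) * √(∑ i ∈ S, w i ^ 2) := by
  have hinv : ∑ i ∈ S, (1 / √(superlevelCard S w i)) ^ 2 ≤ (harmonic #S : ℝ) := by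
    simp_rw [div_pow, one_pow, Real.sq_sqrt (Nat.cast_nonneg _), one_div]
    exact sum_inv_superlevelCard_le_harmonic S w
  calc ‖∑ i ∈ S, w i • t i‖ ≤ C * ∑ i ∈ S, w i * (1 / √(superlevelCard S w i)) := by
        simpa only [mul_one_div] using norm_sum_smul_le_sum_div_sqrt_superlevelCard hC hw ht
    _ ≤ C * (√(∑ i ∈ S, w i ^ 2) * √(harmonic #S : ℝ)) := by
        gcongr
        exact (Real.sum_mul_le_sqrt_mul_sqrt _ _ _).trans (by gcongr)
    _ = C * √(harmonic #S : ℝ) * √(∑ i ∈ S, w i ^ 2) := by ring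

end Superlevel

section Decoupled

variable {ι κ E : Type*} [DecidableEq ι] [DecidableEq κ] [NormedAddCommGroup E] [NormedSpace ℝ E]

theorem norm_sum_sum_mul_smul_le {G : ι → κ → E} {I : Finset ι} {J : Finset κ} {u : ι → ℝ}
    {v : κ → ℝ} {θ : ℝ} (hθ : 0 ≤ θ) (hu : ∀ p ∈ I, 0 ≤ u p) (hv : ∀ q ∈ J, 0 ≤ v q)
    (hG : ∀ I' ⊆ I, ∀ J' ⊆ J, ‖∑ p ∈ I', ∑ q ∈ J', G p q‖ ≤ θ * √(#I' : ℝ) * √(#J' : ℝ)) :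
    ‖∑ p ∈ I, ∑ q ∈ J, (u p * v q) • G p q‖ ≤ θ * √(harmonic #I : ℝ) * √(harmonic #J : ℝ)
      * √(∑ p ∈ I, u p ^ 2) * √(∑ q ∈ J, v q ^ 2) := by
  set Hv := √(harmonic #J : ℝ) * √(∑ q ∈ J, v q ^ 2)
  have hrows : ∀ I' ⊆ I, ‖∑ p ∈ I', ∑ q ∈ J, v q • G p q‖ ≤ θ * Hv * √(#I' : ℝ) := by
    intro I' hI'
    rw [sum_comm]
    simp_rw [← smul_sum]
    calc _ ≤ θ * √(#I' : ℝ) * √(harmonic #J : ℝ) * √(∑ q ∈ J, v q ^ 2) :=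
          norm_sum_smul_le_sqrt_harmonic_mul (by positivity) hv fun J' hJ' => by
            rw [sum_comm]; exact hG I' hI' J' hJ'
      _ = θ * Hv * √(#I' : ℝ) := by ring
  calc ‖∑ p ∈ I, ∑ q ∈ J, (u p * v q) • G p q‖ = ‖∑ p ∈ I, u p • ∑ q ∈ J, v q • G p q‖ := by
        simp_rw [smul_sum, smul_smul]
    _ ≤ θ * Hv * √(harmonic #I : ℝ) * √(∑ p ∈ I, u p ^ 2) :=
        norm_sum_smul_le_sqrt_harmonic_mul (by positivity) hu hrows
    _ = _ := by ring

end Decoupled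

section Averaging

variable {ι : Type*} [DecidableEq ι]

lemma card_filter_powerset_mem_notMem {S : Finset ι} {p q : ι} (hp : p ∈ S) (hq : q ∈ S)
    (hpq : p ≠ q) : #{T ∈ S.powerset | p ∈ T ∧ q ∉ T} = 2 ^ (#S - 2) := by
  calc #{T ∈ S.powerset | p ∈ T ∧ q ∉ T} = #((S.erase p).erase q).powerset := by
        refine card_nbij' (fun T => T.erase p) (insert p) ?_ ?_ ?_ ?_ <;> intro T <;>
          simp only [mem_coe, mem_filter, mem_powerset, subset_iff, mem_erase, mem_insert] <;>
          grind
    _ = 2 ^ (#S - 2) := by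
        rw [card_powerset, card_erase_of_mem (mem_erase.mpr ⟨hpq.symm, hq⟩), card_erase_of_mem hp,
          Nat.sub_sub]

lemma sum_powerset_sum_sum_sdiff {M : Type*} [AddCommMonoid M] (S : Finset ι) (F : ι → ι → M) :
    ∑ T ∈ S.powerset, ∑ p ∈ T, ∑ q ∈ S \ T, F p q
      = 2 ^ (#S - 2) • ∑ p ∈ S, ∑ q ∈ S.erase p, F p q := by
  have hindicator : ∀ T ∈ S.powerset, ∑ p ∈ T, ∑ q ∈ S \ T, F p q
      = ∑ p ∈ S, ∑ q ∈ S, if p ∈ T ∧ q ∉ T then F p q else 0 := by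
    intro T hT
    calc ∑ p ∈ T, ∑ q ∈ S \ T, F p q = ∑ p ∈ S, if p ∈ T then ∑ q ∈ S \ T, F p q else 0 := by
          rw [sum_ite_mem, inter_eq_right.mpr (mem_powerset.mp hT)]
      _ = _ := sum_congr rfl fun p _ => by
          by_cases hp : p ∈ T <;> simp [hp, sdiff_eq_filter, sum_filter]
  have hcount : ∀ p ∈ S, ∑ q ∈ S, #{T ∈ S.powerset | p ∈ T ∧ q ∉ T} • F p q
      = 2 ^ (#S - 2) • ∑ q ∈ S.erase p, F p q := by
    intro p hp
    rw [← add_sum_erase S _ hp, smul_sum]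
    simp only [and_not_self, filter_false, card_empty, zero_smul, zero_add]
    exact sum_congr rfl fun q hq => by
      rw [card_filter_powerset_mem_notMem hp (mem_of_mem_erase hq) (ne_of_mem_erase hq).symm]
  rw [sum_congr rfl hindicator, sum_comm, smul_sum, ← sum_congr rfl hcount]
  refine sum_congr rfl fun p _ => ?_
  rw [sum_comm]
  exact sum_congr rfl fun q _ => by rw [← sum_filter, sum_const]

end Averaging

section OffDiagonal

variable {ι E : Type*} [NormedAddCommGroup E]

def FlatOn (S : Finset ι) (G : ι → ι → E) (θ : ℝ) : Prop :=
  ∀ I ⊆ S, ∀ J ⊆ S, Disjoint I J → ‖∑ p ∈ I, ∑ q ∈ J, G p q‖ ≤ θ * √(#I : ℝ) * √(#J : ℝ)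

variable [DecidableEq ι] [NormedSpace ℝ E]

def offDiagSum (S : Finset ι) (G : ι → ι → E) (u v : ι → ℝ) : E :=
  ∑ p ∈ S, ∑ q ∈ S.erase p, (u p * v q) • G p q

theorem norm_offDiagSum_le_of_nonneg {S : Finset ι} {G : ι → ι → E} {θ : ℝ} {u v : ι → ℝ}
    (hθ : 0 ≤ θ) (hG : FlatOn S G θ) (hu : ∀ p ∈ S, 0 ≤ u p) (hv : ∀ q ∈ S, 0 ≤ v q) :
    ‖offDiagSum S G u v‖
      ≤ 4 * θ * harmonic #S * √(∑ p ∈ S, u p ^ 2) * √(∑ q ∈ S, v q ^ 2) := by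
  set M := θ * harmonic #S * √(∑ p ∈ S, u p ^ 2) * √(∑ q ∈ S, v q ^ 2)
  have hM : 0 ≤ M := by
    have : (0 : ℝ) ≤ harmonic #S := by exact_mod_cast harmonic_nonneg _
    unfold M; positivity
  have hpart : ∀ T ∈ S.powerset, ‖∑ p ∈ T, ∑ q ∈ S \ T, (u p * v q) • G p q‖ ≤ M := by
    intro T hT
    have hTS := mem_powerset.mp hT
    calc _ ≤ θ * √(harmonic #T : ℝ) * √(harmonic #(S \ T) : ℝ)
            * √(∑ p ∈ T, u p ^ 2) * √(∑ q ∈ S \ T, v q ^ 2) :=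
          norm_sum_sum_mul_smul_le hθ (fun p hp => hu p (hTS hp))
            (fun q hq => hv q (sdiff_subset hq)) fun I hI J hJ =>
            hG I (hI.trans hTS) J (hJ.trans sdiff_subset) (disjoint_sdiff.mono hI hJ)
      _ ≤ θ * √(harmonic #S : ℝ) * √(harmonic #S : ℝ)
            * √(∑ p ∈ S, u p ^ 2) * √(∑ q ∈ S, v q ^ 2) := by
          gcongr θ * √(?_ : ℝ) * √(?_ : ℝ) * √?_ * √?_
          · exact_mod_cast harmonic_mono (card_le_card hTS)
          · exact_mod_cast harmonic_mono (card_le_card sdiff_subset)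
          · exact sum_le_sum_of_subset_of_nonneg hTS fun _ _ _ => sq_nonneg _
          · exact sum_le_sum_of_subset_of_nonneg sdiff_subset fun _ _ _ => sq_nonneg _
      _ = M := by rw [mul_assoc θ, Real.mul_self_sqrt (by exact_mod_cast harmonic_nonneg _)]
  have hsum : 2 ^ (#S - 2) * ‖offDiagSum S G u v‖ ≤ 2 ^ #S * M := by
    calc 2 ^ (#S - 2) * ‖offDiagSum S G u v‖ = ‖2 ^ (#S - 2) • offDiagSum S G u v‖ := by
          rw [RCLike.norm_nsmul ℝ, nsmul_eq_mul]; push_cast; ring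
      _ = ‖∑ T ∈ S.powerset, ∑ p ∈ T, ∑ q ∈ S \ T, (u p * v q) • G p q‖ := by
          rw [offDiagSum, sum_powerset_sum_sum_sdiff]
      _ ≤ #S.powerset • M := (norm_sum_le _ _).trans (sum_le_card_nsmul _ _ _ hpart)
      _ = 2 ^ #S * M := by rw [card_powerset, nsmul_eq_mul]; push_cast; ring
  have hpow : (2 : ℝ) ^ #S ≤ 2 ^ (#S - 2) * 4 := by
    rw [show (4 : ℝ) = 2 ^ 2 by norm_num, ← pow_add]
    exact pow_le_pow_right₀ one_le_two (by omega)
  have h2 : (0 : ℝ) < 2 ^ (#S - 2) := by positivity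
  nlinarith

theorem norm_offDiagSum_le {S : Finset ι} {G : ι → ι → E} {θ : ℝ} (hθ : 0 ≤ θ)
    (hG : FlatOn S G θ) (u v : ι → ℝ) :
    ‖offDiagSum S G u v‖
      ≤ 8 * θ * harmonic #S * √(∑ p ∈ S, u p ^ 2) * √(∑ q ∈ S, v q ^ 2) := by
  have hbilin : ∀ a b c d : ι → ℝ, offDiagSum S G (a - b) (c - d) = offDiagSum S G a c
      - offDiagSum S G a d - offDiagSum S G b c + offDiagSum S G b d := by
    intro a b c d
    simp only [offDiagSum, Pi.sub_apply, sub_mul, mul_sub, sub_smul, sum_sub_distrib]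
    abel
  have hparts : ∀ w : ι → ℝ, √(∑ p ∈ S, w⁺ p ^ 2) + √(∑ p ∈ S, w⁻ p ^ 2)
      ≤ √2 * √(∑ p ∈ S, w p ^ 2) := fun w => by
    have h := sqrt_add_sqrt_le_sqrt_two_mul (sum_nonneg fun p (_ : p ∈ S) => sq_nonneg (w⁺ p))
      (sum_nonneg fun p (_ : p ∈ S) => sq_nonneg (w⁻ p))
    simpa only [← sum_add_distrib, Pi.posPart_apply, Pi.negPart_apply, posPart_sq_add_negPart_sq]
      using h
  have hnn : ∀ a b : ι → ℝ, 0 ≤ a → 0 ≤ b → ‖offDiagSum S G a b‖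
      ≤ 4 * θ * harmonic #S * √(∑ p ∈ S, a p ^ 2) * √(∑ q ∈ S, b q ^ 2) := fun a b ha hb =>
    norm_offDiagSum_le_of_nonneg hθ hG (fun p _ => ha p) (fun q _ => hb q)
  have hH : 0 ≤ 4 * θ * harmonic #S := by
    have : (0 : ℝ) ≤ harmonic #S := by exact_mod_cast harmonic_nonneg _
    positivity
  set L : (ι → ℝ) → ℝ := fun w => √(∑ p ∈ S, w p ^ 2)
  calc ‖offDiagSum S G u v‖
      = ‖offDiagSum S G (u⁺ - u⁻) (v⁺ - v⁻)‖ := by rw [posPart_sub_negPart, posPart_sub_negPart]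
    _ ≤ ‖offDiagSum S G u⁺ v⁺‖ + ‖offDiagSum S G u⁺ v⁻‖ + ‖offDiagSum S G u⁻ v⁺‖
          + ‖offDiagSum S G u⁻ v⁻‖ := by
        rw [hbilin]
        exact (norm_add_le _ _).trans (add_le_add_left ((norm_sub_le _ _).trans
          (add_le_add_left (norm_sub_le _ _) _)) _)
    _ ≤ 4 * θ * harmonic #S * ((L u⁺ + L u⁻) * (L v⁺ + L v⁻)) := by
        have := posPart_nonneg u; have := negPart_nonneg u
        have := posPart_nonneg v; have := negPart_nonneg v
        linarith [hnn u⁺ v⁺ ‹_› ‹_›, hnn u⁺ v⁻ ‹_› ‹_›, hnn u⁻ v⁺ ‹_› ‹_›, hnn u⁻ v⁻ ‹_› ‹_›]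
    _ ≤ 4 * θ * harmonic #S * ((√2 * L u) * (√2 * L v)) := by
        gcongr
        exacts [hparts u, hparts v]
    _ = 8 * θ * harmonic #S * L u * L v := by
        linear_combination (4 * θ * harmonic #S * L u * L v) * Real.mul_self_sqrt zero_le_two

theorem norm_sum_sum_erase_star_mul_le {S : Finset ι} {G : ι → ι → ℂ} {θ : ℝ} (hθ : 0 ≤ θ)
    (hG : FlatOn S G θ) (x : ι → ℂ) :
    ‖∑ p ∈ S, ∑ q ∈ S.erase p, star (x p) * x q * G p q‖
      ≤ 16 * θ * harmonic #S * ∑ p ∈ S, ‖x p‖ ^ 2 := by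
  set r : ι → ℝ := fun p => (x p).re
  set m : ι → ℝ := fun p => (x p).im
  have hsplit : ∑ p ∈ S, ∑ q ∈ S.erase p, star (x p) * x q * G p q
      = offDiagSum S G r r + offDiagSum S G m m
        + Complex.I * (offDiagSum S G r m - offDiagSum S G m r) := by
    simp only [offDiagSum, Complex.real_smul, mul_sub, mul_sum, ← sum_add_distrib,
      ← sum_sub_distrib]
    refine sum_congr rfl fun p _ => sum_congr rfl fun q _ => ?_
    rw [← Complex.re_add_im (x p), ← Complex.re_add_im (x q)]
    simp only [Complex.star_def, map_add, map_mul, Complex.conj_ofReal, Complex.conj_I, r, m]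
    push_cast
    linear_combination (-(x p).im * (x q).im * G p q) * Complex.I_sq
  have hnorm : ∑ p ∈ S, ‖x p‖ ^ 2 = √(∑ p ∈ S, r p ^ 2) ^ 2 + √(∑ p ∈ S, m p ^ 2) ^ 2 := by
    rw [Real.sq_sqrt (sum_nonneg fun _ _ => sq_nonneg _),
      Real.sq_sqrt (sum_nonneg fun _ _ => sq_nonneg _), ← sum_add_distrib]
    exact sum_congr rfl fun p _ => by rw [Complex.sq_norm, Complex.normSq_apply]; ring
  have hH : 0 ≤ 8 * θ * harmonic #S := by
    have : (0 : ℝ) ≤ harmonic #S := by exact_mod_cast harmonic_nonneg _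
    positivity
  set R := √(∑ p ∈ S, r p ^ 2)
  set M := √(∑ p ∈ S, m p ^ 2)
  calc _ ≤ ‖offDiagSum S G r r‖ + ‖offDiagSum S G m m‖
          + (‖offDiagSum S G r m‖ + ‖offDiagSum S G m r‖) := by
        rw [hsplit]
        refine (norm_add_le _ _).trans (add_le_add (norm_add_le _ _) ?_)
        rw [norm_mul, Complex.norm_I, one_mul]
        exact norm_sub_le _ _
    _ ≤ 8 * θ * harmonic #S * (R + M) ^ 2 := by
        linarith [norm_offDiagSum_le hθ hG r r, norm_offDiagSum_le hθ hG m m,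
          norm_offDiagSum_le hθ hG r m, norm_offDiagSum_le hθ hG m r]
    _ ≤ 16 * θ * harmonic #S * ∑ p ∈ S, ‖x p‖ ^ 2 := by
        rw [hnorm]
        nlinarith [mul_nonneg hH (sq_nonneg (R - M))]

theorem norm_sum_sum_erase_star_mul_le_log {S : Finset ι} {G : ι → ι → ℂ} {θ : ℝ} {K : ℕ}
    (hθ : 0 ≤ θ) (hG : FlatOn S G θ) (hS : #S ≤ K) (x : ι → ℂ) :
    ‖∑ p ∈ S, ∑ q ∈ S.erase p, star (x p) * x q * G p q‖
      ≤ 150 * θ * Real.log K * ∑ p ∈ S, ‖x p‖ ^ 2 := by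
  have hx : 0 ≤ ∑ p ∈ S, ‖x p‖ ^ 2 := sum_nonneg fun _ _ => by positivity
  rcases le_or_gt #S 1 with hS1 | hS2
  · have hzero : ∑ p ∈ S, ∑ q ∈ S.erase p, star (x p) * x q * G p q = 0 :=
      sum_eq_zero fun p hp => by
        rw [card_eq_zero.mp (by rw [card_erase_of_mem hp]; omega : #(S.erase p) = 0), sum_empty]
    rw [hzero, norm_zero]
    exact mul_nonneg (mul_nonneg (by positivity) (Real.log_natCast_nonneg K)) hx
  · have hH : (harmonic #S : ℝ) ≤ 1 + Real.log K :=
      (by exact_mod_cast harmonic_mono hS : (harmonic #S : ℝ) ≤ harmonic K).trans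
        (harmonic_le_one_add_log K)
    have hlog : Real.log 2 ≤ Real.log K :=
      Real.log_le_log two_pos (by exact_mod_cast hS2.trans_le hS)
    have hconst : 16 * θ * harmonic #S ≤ 150 * θ * Real.log K := by
      nlinarith [Real.log_two_gt_d9]
    exact (norm_sum_sum_erase_star_mul_le hθ hG x).trans (mul_le_mul_of_nonneg_right hconst hx)

end OffDiagonal

section GramMatrix

variable {m n : Type*} [Fintype m]

lemma sum_sum_conjTranspose_mul_self (Φ : Matrix m n ℂ) (I J : Finset n) :
    ∑ p ∈ I, ∑ q ∈ J, (Φᴴ * Φ) p q = ∑ l, star (∑ p ∈ I, Φ l p) * ∑ q ∈ J, Φ l q := by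
  simp only [mul_apply, conjTranspose_apply, star_sum, sum_mul_sum]
  exact (sum_congr rfl fun p _ => sum_comm).trans sum_comm

theorem HasFlatRIP.flatOn [Fintype n] {Φ : Matrix m n ℂ} {K : ℕ} {θ : ℝ} (h : HasFlatRIP Φ K θ)
    {S : Finset n} (hS : #S ≤ K) : FlatOn S (fun p q => (Φᴴ * Φ) p q) θ := by
  intro I hI J hJ hIJ
  have hJI := h J I hIJ.symm ((card_le_card hJ).trans hS) ((card_le_card hI).trans hS)
  rw [sum_sum_conjTranspose_mul_self, mul_assoc, ← Real.sqrt_mul (Nat.cast_nonneg _),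
    mul_comm (#I : ℝ)]
  simpa only [Complex.star_def, mul_comm ((starRingEnd ℂ) _)] using hJI

lemma ofReal_sum_norm_sum_mul_sq [Fintype n] (Φ : Matrix m n ℂ) (x : n → ℂ) :
    ((∑ i, ‖∑ j, Φ i j * x j‖ ^ 2 : ℝ) : ℂ) = ∑ p, ∑ q, star (x p) * x q * (Φᴴ * Φ) p q := by
  simp only [mul_apply, conjTranspose_apply, mul_sum]
  push_cast
  simp_rw [← Complex.conj_mul', ← Complex.star_def, star_sum, sum_mul_sum]
  rw [sum_comm]
  refine sum_congr rfl fun p _ => ?_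
  rw [sum_comm]
  refine sum_congr rfl fun q _ => sum_congr rfl fun i _ => ?_
  rw [star_mul]
  ring

theorem sum_norm_sum_mul_sq_eq [Fintype n] [DecidableEq n] (Φ : Matrix m n ℂ)
    (hcols : ∀ j, ∑ i, ‖Φ i j‖ ^ 2 = 1)
    {x : n → ℂ} {S : Finset n} (hx : ∀ j ∉ S, x j = 0) :
    ∑ i, ‖∑ j, Φ i j * x j‖ ^ 2 = ∑ p ∈ S, ‖x p‖ ^ 2
      + (∑ p ∈ S, ∑ q ∈ S.erase p, star (x p) * x q * (Φᴴ * Φ) p q).re := by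
  have hdiag : ∀ p, (Φᴴ * Φ) p p = 1 := fun p => by
    simp_rw [mul_apply, conjTranspose_apply, Complex.star_def, Complex.conj_mul']
    exact_mod_cast hcols p
  have hsupp : ∑ p, ∑ q, star (x p) * x q * (Φᴴ * Φ) p q
      = ∑ p ∈ S, ∑ q ∈ S, star (x p) * x q * (Φᴴ * Φ) p q := by
    exact (sum_subset (subset_univ S) fun p _ hp => by simp [hx p hp]).symm.trans
      (sum_congr rfl fun p _ => (sum_subset (subset_univ S) fun q _ hq => by simp [hx q hq]).symm)
  have hsplit : ∀ p ∈ S, ∑ q ∈ S, star (x p) * x q * (Φᴴ * Φ) p q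
      = ((‖x p‖ ^ 2 : ℝ) : ℂ) + ∑ q ∈ S.erase p, star (x p) * x q * (Φᴴ * Φ) p q := fun p hp => by
    rw [← add_sum_erase S _ hp, hdiag, mul_one, Complex.star_def, Complex.conj_mul']
    push_cast
    rfl
  rw [← Complex.ofReal_re (∑ i, _), ofReal_sum_norm_sum_mul_sq, hsupp, sum_congr rfl hsplit,
    sum_add_distrib, Complex.add_re, ← Complex.ofReal_sum, Complex.ofReal_re]

end GramMatrix

theorem stmt_9_general {m n : Type*} [Fintype m] [Fintype n]
    (Φ : Matrix m n ℂ) (K : ℕ) (θ : ℝ)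
    (hcols : ∀ j : n, ∑ i, ‖Φ i j‖ ^ 2 = 1)
    (hθ : 0 < θ) (hflat : HasFlatRIP Φ K θ) :
    HasRIP Φ K (150 * θ * Real.log K) := by
  classical
  intro x hx
  let S : Finset n := {j | x j ≠ 0}
  have hS : #S ≤ K := by
    rwa [show {j | x j ≠ 0} = (S : Set n) by ext; simp [S], Set.ncard_coe_finset] at hx
  have hxS : ∀ j ∉ S, x j = 0 := fun j hj => by simpa [S] using hj
  have hnorm : ∑ j, ‖x j‖ ^ 2 = ∑ j ∈ S, ‖x j‖ ^ 2 :=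
    (sum_subset (subset_univ S) fun j _ hj => by simp [hxS j hj]).symm
  have hoff := (Complex.abs_re_le_norm _).trans
    (norm_sum_sum_erase_star_mul_le_log hθ.le (hflat.flatOn hS) hS x)
  rw [sum_norm_sum_mul_sq_eq Φ hcols hxS, hnorm]
  constructor <;> linarith [abs_le.mp hoff]

/-- flat RIP implies RIP: if each column of the `M × N` matrix `Φ` has
unit ℓ₂-norm, `K ≤ M ≤ N`, `θ > 0`, and `Φ` has the `(K, θ)`-flat RIP, then `Φ` has
the `(K, 150·θ·log K)`-RIP. -/
theorem stmt_9 {m n : Type*} [Fintype m] [Fintype n]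
    (Φ : Matrix m n ℂ) (K : ℕ) (θ : ℝ)
    (hcols : ∀ j : n, ∑ i, ‖Φ i j‖ ^ 2 = 1)
    (hKM : K ≤ Fintype.card m) (hMN : Fintype.card m ≤ Fintype.card n)
    (hθ : 0 < θ) (hflat : HasFlatRIP Φ K θ) :
    HasRIP Φ K (150 * θ * Real.log K) :=
  stmt_9_general Φ K θ hcols hθ hflat
end
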